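/- arXiv:1612.02041 — 7 statements merged into one kernel-verified Lean document; each statement's English description precedes it below -/
import Mathlib

section
/- Along any differentiable solution c : I → ℂ³ of the equations of motion of the trimer Hamiltonian, the quantity N(t) = |c1(t)|² + |c2(t)|² + |c3(t)|² is constant in t. -/
open Complex ComplexConjugate

/-- The Wirtinger derivative `∂H/∂(conj c₁)` of the trimer Hamiltonian. -/
noncomputable def trimerRHS1 (Ω1 A : ℝ) (c1 c2 c3 : ℂ) : ℂ :=
  (Ω1 : ℂ) * c1 - (A : ℂ) *
    (3 * (c1 * conj c1 + c3 * conj c3) * c1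
      + 3 * (c1 * conj c3 + c3 * conj c1) * c3
      + c1 * (c1 * conj c3 + c3 * conj c1)
      + (c1 * conj c1 + c3 * conj c3) * c3
      - 4 * c2 * conj c2 * (c3 - c1)
      - 2 * (conj c3 - conj c1) * c2 ^ 2)

/-- The Wirtinger derivative `∂H/∂(conj c₂)` of the trimer Hamiltonian. -/
noncomputable def trimerRHS2 (Ω2 A : ℝ) (c1 c2 c3 : ℂ) : ℂ :=
  (Ω2 : ℂ) * c2 - (A : ℂ) *
    (4 * c2 ^ 2 * conj c2
      + 4 * c2 * (c3 - c1) * (conj c3 - conj c1)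
      + 2 * (c3 - c1) ^ 2 * conj c2)

/-- The Wirtinger derivative `∂H/∂(conj c₃)` of the trimer Hamiltonian. -/
noncomputable def trimerRHS3 (Ω3 A : ℝ) (c1 c2 c3 : ℂ) : ℂ :=
  (Ω3 : ℂ) * c3 - (A : ℂ) *
    (3 * (c1 * conj c1 + c3 * conj c3) * c3
      + 3 * (c1 * conj c3 + c3 * conj c1) * c1
      + c3 * (c1 * conj c3 + c3 * conj c1)
      + (c1 * conj c1 + c3 * conj c3) * c1
      + 4 * c2 * conj c2 * (c3 - c1)
      + 2 * (conj c3 - conj c1) * c2 ^ 2)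

/-! The trimer Hamiltonian is invariant under the global phase rotation `c ↦ e^{iθ} c`, and by
Noether's theorem the generator of that symmetry, `N = Σ |c_j|²`, is conserved. Concretely, along
`i ċ_j = F_j` one has `d|c_j|²/dt = 2 Im (conj c_j · F_j)`, and the phase invariance makes
`Σ conj c_j · F_j` real. -/

theorem Convex.is_const_of_hasDerivWithinAt_zero {E : Type*} [NormedAddCommGroup E]
    [NormedSpace ℝ E] {f : ℝ → E} {s : Set ℝ} (hs : Convex ℝ s)
    (hf : ∀ x ∈ s, HasDerivWithinAt f 0 s x) {x y : ℝ} (hx : x ∈ s) (hy : y ∈ s) :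
    f x = f y := by
  have h := hs.norm_image_sub_le_of_norm_hasDerivWithin_le hf (C := 0)
    (fun _ _ => norm_zero.le) hx hy
  rw [zero_mul, norm_le_zero_iff, sub_eq_zero] at h
  exact h.symm

theorem HasDerivAt.sq_norm_of_neg_I_mul {c : ℝ → ℂ} {F : ℂ} {t : ℝ}
    (h : HasDerivAt c (-I * F) t) :
    HasDerivAt (fun t => ‖c t‖ ^ 2) (2 * (conj (c t) * F).im) t := by
  convert h.norm_sq using 2
  simp only [Complex.inner, mul_re, mul_im, neg_re, neg_im, I_re, I_im, conj_re, conj_im]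
  ring

theorem trimer_im_sum_conj_mul_rhs_eq_zero (Ω1 Ω2 Ω3 A : ℝ) (z1 z2 z3 : ℂ) :
    (conj z1 * trimerRHS1 Ω1 A z1 z2 z3 + conj z2 * trimerRHS2 Ω2 A z1 z2 z3
      + conj z3 * trimerRHS3 Ω3 A z1 z2 z3).im = 0 := by
  rw [← conj_eq_iff_im]
  simp only [trimerRHS1, trimerRHS2, trimerRHS3, map_add, map_mul, map_sub, map_pow,
    conj_conj, conj_ofReal, map_ofNat]
  ring

/-- Along any differentiable solution of the trimer equations of motion
`i ċ_j = ∂H/∂(conj c_j)` on an interval `I`, the power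
`N(t) = |c₁(t)|² + |c₂(t)|² + |c₃(t)|²` is constant. -/
theorem trimer_power_conserved (Ω1 Ω2 Ω3 A : ℝ) (I : Set ℝ) (hI : Convex ℝ I)
    (c1 c2 c3 : ℝ → ℂ)
    (h1 : ∀ t ∈ I, HasDerivAt c1 (-Complex.I * trimerRHS1 Ω1 A (c1 t) (c2 t) (c3 t)) t)
    (h2 : ∀ t ∈ I, HasDerivAt c2 (-Complex.I * trimerRHS2 Ω2 A (c1 t) (c2 t) (c3 t)) t)
    (h3 : ∀ t ∈ I, HasDerivAt c3 (-Complex.I * trimerRHS3 Ω3 A (c1 t) (c2 t) (c3 t)) t) :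
    ∀ s ∈ I, ∀ t ∈ I,
      ‖c1 s‖ ^ 2 + ‖c2 s‖ ^ 2 + ‖c3 s‖ ^ 2
        = ‖c1 t‖ ^ 2 + ‖c2 t‖ ^ 2 + ‖c3 t‖ ^ 2 := by
  have hN : ∀ t ∈ I,
      HasDerivWithinAt (fun t => ‖c1 t‖ ^ 2 + ‖c2 t‖ ^ 2 + ‖c3 t‖ ^ 2) 0 I t := by
    intro t ht
    have hsum := (((h1 t ht).sq_norm_of_neg_I_mul.add (h2 t ht).sq_norm_of_neg_I_mul).add
      (h3 t ht).sq_norm_of_neg_I_mul).hasDerivWithinAt (s := I)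
    have hflux := trimer_im_sum_conj_mul_rhs_eq_zero Ω1 Ω2 Ω3 A (c1 t) (c2 t) (c3 t)
    rw [add_im, add_im] at hflux
    exact hsum.congr_deriv (by linarith)
  intro s hs t ht
  exact hI.is_const_of_hasDerivWithinAt_zero hN hs ht
end

section
/- The even subspace {c2 = 0} is invariant under the trimer flow: if c : I → ℂ³ is a solution of the equations of motion of the trimer Hamiltonian on an interval I containing 0 and c2(0) = 0, then c2(t) = 0 for all t ∈ I. -/
open Complex ComplexConjugate

/-! Along a solution, `ċ₂ = -i (α(t) c₂ + β(t) conj c₂)` where `α = Ω₂ - A (4|c₂|² + 4|c₃ - c₁|²)`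
and `β = -2A (c₃ - c₁)²` are continuous in `t`. Hence `‖ċ₂‖ ≤ g(t) ‖c₂‖` with `g` continuous, and
Gronwall's inequality, run forwards and backwards in time from `t = 0`, forces `c₂ ≡ 0`. -/

section Gronwall

variable {E : Type*} [NormedAddCommGroup E] [NormedSpace ℝ E] {f f' : ℝ → E} {g : ℝ → ℝ}

theorem eq_zero_of_norm_deriv_le_mul_norm_Icc {a b : ℝ} (hab : a ≤ b)
    (hf : ∀ s ∈ Set.Icc a b, HasDerivAt f (f' s) s)
    (hbound : ∀ s ∈ Set.Icc a b, ‖f' s‖ ≤ g s * ‖f s‖)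
    (hg : ContinuousOn g (Set.Icc a b)) (ha : f a = 0) : f b = 0 := by
  obtain ⟨s₀, -, hmax⟩ := isCompact_Icc.exists_isMaxOn (Set.nonempty_Icc.2 hab) hg
  refine eq_zero_of_abs_deriv_le_mul_abs_self_of_eq_zero_right (K := g s₀)
    (fun s hs => (hf s hs).continuousAt.continuousWithinAt)
    (fun s hs => (hf s (Set.Ico_subset_Icc_self hs)).hasDerivWithinAt) ha
    (fun s hs => ?_) b (Set.right_mem_Icc.2 hab)
  have hs := Set.Ico_subset_Icc_self hs
  exact (hbound s hs).trans (mul_le_mul_of_nonneg_right (hmax hs) (norm_nonneg _))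

theorem Convex.eq_zero_of_norm_deriv_le_mul_norm {I : Set ℝ} (hI : Convex ℝ I) {t₀ : ℝ}
    (ht₀ : t₀ ∈ I) (hf : ∀ s ∈ I, HasDerivAt f (f' s) s)
    (hbound : ∀ s ∈ I, ‖f' s‖ ≤ g s * ‖f s‖) (hg : ContinuousOn g I) (hf₀ : f t₀ = 0) :
    ∀ t ∈ I, f t = 0 := by
  intro t ht
  rcases le_total t₀ t with hle | hle
  · have hsub : Set.Icc t₀ t ⊆ I := hI.ordConnected.out ht₀ ht
    exact eq_zero_of_norm_deriv_le_mul_norm_Icc hle (fun s hs => hf s (hsub hs))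
      (fun s hs => hbound s (hsub hs)) (hg.mono hsub) hf₀
  · have hsub : ∀ s ∈ Set.Icc (-t₀) (-t), -s ∈ I := fun s hs =>
      hI.ordConnected.out ht ht₀ ⟨le_neg_of_le_neg hs.2, neg_le_of_neg_le hs.1⟩
    have hrev := eq_zero_of_norm_deriv_le_mul_norm_Icc (f := fun s => f (-s))
      (f' := fun s => -f' (-s)) (g := fun s => g (-s)) (neg_le_neg hle)
      (fun s hs => by
        simpa [Function.comp_def] using (hf (-s) (hsub s hs)).scomp s (hasDerivAt_neg s))
      (fun s hs => by simpa using hbound (-s) (hsub s hs))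
      (hg.comp continuousOn_neg hsub) (by simpa using hf₀)
    simpa using hrev

end Gronwall

theorem trimerRHS2_eq (Ω2 A : ℝ) (x y z : ℂ) :
    trimerRHS2 Ω2 A x y z =
      (Ω2 - A * (4 * ‖y‖ ^ 2 + 4 * ‖z - x‖ ^ 2) : ℝ) * y - 2 * A * (z - x) ^ 2 * conj y := by
  simp only [trimerRHS2]
  push_cast
  simp only [← mul_conj', map_sub]
  ring

theorem norm_trimerRHS2_le (Ω2 A : ℝ) (x y z : ℂ) :
    ‖trimerRHS2 Ω2 A x y z‖ ≤ (|Ω2| + 4 * |A| * ‖y‖ ^ 2 + 6 * |A| * ‖z - x‖ ^ 2) * ‖y‖ := by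
  rw [trimerRHS2_eq]
  calc _ ≤ ‖((Ω2 - A * (4 * ‖y‖ ^ 2 + 4 * ‖z - x‖ ^ 2) : ℝ) : ℂ) * y‖
        + ‖2 * (A : ℂ) * (z - x) ^ 2 * conj y‖ := norm_sub_le _ _
    _ = |Ω2 - A * (4 * ‖y‖ ^ 2 + 4 * ‖z - x‖ ^ 2)| * ‖y‖ + 2 * |A| * ‖z - x‖ ^ 2 * ‖y‖ := by
        simp only [norm_mul, norm_pow, Complex.norm_conj, Complex.norm_real, Real.norm_eq_abs,
          Complex.norm_ofNat]
    _ ≤ _ := by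
        have hA : |A * (4 * ‖y‖ ^ 2 + 4 * ‖z - x‖ ^ 2)| = |A| * (4 * ‖y‖ ^ 2 + 4 * ‖z - x‖ ^ 2) := by
          rw [abs_mul, abs_of_nonneg (by positivity : (0 : ℝ) ≤ 4 * ‖y‖ ^ 2 + 4 * ‖z - x‖ ^ 2)]
        nlinarith [abs_sub Ω2 (A * (4 * ‖y‖ ^ 2 + 4 * ‖z - x‖ ^ 2)), norm_nonneg y]

/-- The even subspace `{c₂ = 0}` is invariant under the trimer flow: if a solution
of the trimer equations of motion `i ċ_j = ∂H/∂(conj c_j)` on an interval `I`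
containing `0` satisfies `c₂(0) = 0`, then `c₂(t) = 0` for all `t ∈ I`. -/
theorem trimer_even_subspace_invariant (Ω1 Ω2 Ω3 A : ℝ) (I : Set ℝ) (hI : Convex ℝ I)
    (hI0 : (0 : ℝ) ∈ I) (c1 c2 c3 : ℝ → ℂ)
    (h1 : ∀ t ∈ I, HasDerivAt c1 (-Complex.I * trimerRHS1 Ω1 A (c1 t) (c2 t) (c3 t)) t)
    (h2 : ∀ t ∈ I, HasDerivAt c2 (-Complex.I * trimerRHS2 Ω2 A (c1 t) (c2 t) (c3 t)) t)
    (h3 : ∀ t ∈ I, HasDerivAt c3 (-Complex.I * trimerRHS3 Ω3 A (c1 t) (c2 t) (c3 t)) t)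
    (hc20 : c2 0 = 0) :
    ∀ t ∈ I, c2 t = 0 := by
  have hc1 : ContinuousOn c1 I := fun s hs => (h1 s hs).continuousAt.continuousWithinAt
  have hc2 : ContinuousOn c2 I := fun s hs => (h2 s hs).continuousAt.continuousWithinAt
  have hc3 : ContinuousOn c3 I := fun s hs => (h3 s hs).continuousAt.continuousWithinAt
  refine hI.eq_zero_of_norm_deriv_le_mul_norm hI0 h2
    (g := fun s => |Ω2| + 4 * |A| * ‖c2 s‖ ^ 2 + 6 * |A| * ‖c3 s - c1 s‖ ^ 2)
    (fun s _ => ?_) (by fun_prop) hc20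
  rw [norm_mul, norm_neg, Complex.norm_I, one_mul]
  exact norm_trimerRHS2_le Ω2 A (c1 s) (c2 s) (c3 s)
end

section
/- For every N > 0, the curve c(t) = (0, √N · e^{−i(Ω2 − 4AN)t}, 0) is an exact solution of the equations of motion of the trimer Hamiltonian (the nonlinear continuation of the dipole mode, a relative fixed point with frequency Ω2 − 4AN). -/
/-! On the plane c₁ = c₃ = 0 the right-hand sides for c₁ and c₃ vanish and the one for c₂ reduces to
(Ω₂ − 4A|c₂|²) c₂. The rotating curve keeps |c₂|² = N, so it is the solution of the linear equation
i ċ₂ = (Ω₂ − 4AN) c₂. -/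

open Complex ComplexConjugate

theorem trimerRHS1_zero_left_right (Ω1 A : ℝ) (z : ℂ) : trimerRHS1 Ω1 A 0 z 0 = 0 := by
  simp [trimerRHS1]

theorem trimerRHS3_zero_left_right (Ω3 A : ℝ) (z : ℂ) : trimerRHS3 Ω3 A 0 z 0 = 0 := by
  simp [trimerRHS3]

theorem trimerRHS2_zero_left_right (Ω2 A : ℝ) (z : ℂ) :
    trimerRHS2 Ω2 A 0 z 0 = (Ω2 - 4 * A * normSq z) * z := by
  simp only [trimerRHS2, sub_zero, map_zero, mul_zero, add_zero, ← mul_conj]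
  ring

theorem hasDerivAt_const_mul_exp_mul_ofReal (a c : ℂ) (t : ℝ) :
    HasDerivAt (fun s : ℝ => a * exp (c * s)) (c * (a * exp (c * t))) t := by
  have h := ((hasDerivAt_id' (t : ℂ)).const_mul c).cexp.const_mul a
  convert h.comp_ofReal using 1
  ring

theorem normSq_mul_exp_neg_I_mul_ofReal (a : ℂ) (ω t : ℝ) :
    normSq (a * exp (-I * ω * t)) = normSq a := by
  have h : -I * ω * t = ((-(ω * t) : ℝ) : ℂ) * I := by push_cast; ring
  rw [normSq_mul, h, normSq_eq_norm_sq (exp _), norm_exp_ofReal_mul_I, one_pow, mul_one]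

/-- For every `N > 0`, the curve `c(t) = (0, √N e^{-i(Ω₂-4AN)t}, 0)` is an exact
solution of the trimer equations of motion `i ċ_j = ∂H/∂(conj c_j)`: the nonlinear
continuation of the dipole mode, a relative fixed point with frequency `Ω₂ - 4AN`. -/
theorem trimer_dipole_mode_solution (Ω1 Ω2 Ω3 A N : ℝ) (hN : 0 < N) :
    ∀ t : ℝ,
      HasDerivAt (fun _ : ℝ => (0 : ℂ))
        (-Complex.I * trimerRHS1 Ω1 A 0
          ((Real.sqrt N : ℂ) * Complex.exp (-Complex.I * ((Ω2 : ℂ) - 4 * A * N) * t)) 0) t ∧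
      HasDerivAt (fun s : ℝ => (Real.sqrt N : ℂ) * Complex.exp (-Complex.I * ((Ω2 : ℂ) - 4 * A * N) * s))
        (-Complex.I * trimerRHS2 Ω2 A 0
          ((Real.sqrt N : ℂ) * Complex.exp (-Complex.I * ((Ω2 : ℂ) - 4 * A * N) * t)) 0) t ∧
      HasDerivAt (fun _ : ℝ => (0 : ℂ))
        (-Complex.I * trimerRHS3 Ω3 A 0
          ((Real.sqrt N : ℂ) * Complex.exp (-Complex.I * ((Ω2 : ℂ) - 4 * A * N) * t)) 0) t := by
  intro t
  have hω : (Ω2 : ℂ) - 4 * A * N = ((Ω2 - 4 * A * N : ℝ) : ℂ) := by push_cast; ring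
  have hnorm : normSq ((Real.sqrt N : ℂ) * exp (-I * ((Ω2 : ℂ) - 4 * A * N) * t)) = N := by
    rw [hω, normSq_mul_exp_neg_I_mul_ofReal, normSq_ofReal, Real.mul_self_sqrt hN.le]
  refine ⟨?_, ?_, ?_⟩
  · simpa only [trimerRHS1_zero_left_right, mul_zero] using hasDerivAt_const t (0 : ℂ)
  · rw [trimerRHS2_zero_left_right, hnorm, ← mul_assoc]
    exact hasDerivAt_const_mul_exp_mul_ofReal _ _ t
  · simpa only [trimerRHS3_zero_left_right, mul_zero] using hasDerivAt_const t (0 : ℂ)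
end

section
/- Let A > 0, Δ > 0, N > 0 and let (θ, ρ) with |ρ| < N/2 be an equilibrium of the even-subspace system, i.e. both 2Δ + 4ANρ·cosθ/√(N²−4ρ²) + 12Aρ·cos²θ = 0 and −A·(3(N²−4ρ²)·cosθ + N·√(N²−4ρ²))·sinθ = 0 hold. Then sinθ = 0 and ρ satisfies the quartic equation 144A²ρ⁴ + 48AΔρ³ + 4(Δ²−8A²N²)ρ² − 12AΔN²ρ − Δ²N² = 0. -/
/-! Write `s = √(N² − 4ρ²) > 0`, so that `ρ̇ = −s · A(3s cos θ + N) · sin θ`. Off `sin θ = 0`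
the factor `A(3s cos θ + N)` vanishes, and then the two `A`-terms of `θ̇` cancel, leaving
`θ̇ = 2Δ ≠ 0`. On `sin θ = 0` we have `cos² θ = 1`, and `θ̇ = 0` says
`(2Δ + 12Aρ) s = −4ANρ cos θ`; squaring and substituting `s² = N² − 4ρ²` gives the quartic. -/

lemma sq_sub_four_mul_sq_pos_of_abs_lt_half {N ρ : ℝ} (hρ : |ρ| < N / 2) :
    0 < N ^ 2 - 4 * ρ ^ 2 := by
  have : ρ ^ 2 < (N / 2) ^ 2 := sq_lt_sq' (abs_lt.mp hρ).1 (abs_lt.mp hρ).2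
  linarith

lemma coupling_terms_eq_zero {A N ρ c s : ℝ} (hs : s ≠ 0) (h : A * (3 * s * c + N) = 0) :
    4 * A * N * ρ * c / s + 12 * A * ρ * c ^ 2 = 0 := by
  have : 4 * A * N * ρ * c / s + 12 * A * ρ * c ^ 2 = 4 * ρ * c / s * (A * (3 * s * c + N)) := by
    field_simp
    ring
  rw [this, h, mul_zero]

lemma quartic_eq_zero_of_cos_sq_eq_one {A Δ N ρ c s : ℝ} (hs : s ≠ 0)
    (hs2 : s ^ 2 = N ^ 2 - 4 * ρ ^ 2) (hc : c ^ 2 = 1)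
    (h : 2 * Δ + 4 * A * N * ρ * c / s + 12 * A * ρ * c ^ 2 = 0) :
    144 * A ^ 2 * ρ ^ 4 + 48 * A * Δ * ρ ^ 3 + 4 * (Δ ^ 2 - 8 * A ^ 2 * N ^ 2) * ρ ^ 2
      - 12 * A * Δ * N ^ 2 * ρ - Δ ^ 2 * N ^ 2 = 0 := by
  have hlin : (2 * Δ + 12 * A * ρ) * s + 4 * A * N * ρ * c = 0 := by
    rw [hc] at h
    field_simp at h
    linarith
  linear_combination (-(1 / 4) * ((2 * Δ + 12 * A * ρ) * s - 4 * A * N * ρ * c)) * hlin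
    + (1 / 4) * (2 * Δ + 12 * A * ρ) ^ 2 * hs2 - 4 * A ^ 2 * N ^ 2 * ρ ^ 2 * hc

theorem even_subspace_equilibria_general (A Δ N θ ρ : ℝ)
    (hΔ : 0 < Δ) (hρ : |ρ| < N / 2)
    (hθdot : 2 * Δ + 4 * A * N * ρ * Real.cos θ / Real.sqrt (N ^ 2 - 4 * ρ ^ 2)
        + 12 * A * ρ * Real.cos θ ^ 2 = 0)
    (hρdot : -(A * (3 * (N ^ 2 - 4 * ρ ^ 2) * Real.cos θ
        + N * Real.sqrt (N ^ 2 - 4 * ρ ^ 2)) * Real.sin θ) = 0) :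
    Real.sin θ = 0 ∧
      144 * A ^ 2 * ρ ^ 4 + 48 * A * Δ * ρ ^ 3 + 4 * (Δ ^ 2 - 8 * A ^ 2 * N ^ 2) * ρ ^ 2
        - 12 * A * Δ * N ^ 2 * ρ - Δ ^ 2 * N ^ 2 = 0 := by
  have hpos := sq_sub_four_mul_sq_pos_of_abs_lt_half hρ
  set s := Real.sqrt (N ^ 2 - 4 * ρ ^ 2)
  have hs : s ≠ 0 := (Real.sqrt_pos.mpr hpos).ne'
  have hs2 : s ^ 2 = N ^ 2 - 4 * ρ ^ 2 := Real.sq_sqrt hpos.le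
  have hsin : Real.sin θ = 0 := by
    have hfactor : s * (A * (3 * s * Real.cos θ + N)) * Real.sin θ = 0 := by
      rw [← neg_eq_zero, ← hρdot, ← hs2]
      ring
    refine (mul_eq_zero.mp hfactor).resolve_left fun h ↦ ?_
    have := coupling_terms_eq_zero (ρ := ρ) hs ((mul_eq_zero.mp h).resolve_left hs)
    linarith
  have hcos : Real.cos θ ^ 2 = 1 := by
    simpa [hsin] using Real.sin_sq_add_cos_sq θ
  exact ⟨hsin, quartic_eq_zero_of_cos_sq_eq_one hs hs2 hcos hθdot⟩

/-- If `(θ, ρ)` with `|ρ| < N/2` is an equilibrium of the even-subspace system, then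
`sin θ = 0` and `ρ` satisfies the quartic
`144A²ρ⁴ + 48AΔρ³ + 4(Δ²−8A²N²)ρ² − 12AΔN²ρ − Δ²N² = 0`. -/
theorem even_subspace_equilibria (A Δ N θ ρ : ℝ)
    (hA : 0 < A) (hΔ : 0 < Δ) (hN : 0 < N) (hρ : |ρ| < N / 2)
    (hθdot : 2 * Δ + 4 * A * N * ρ * Real.cos θ / Real.sqrt (N ^ 2 - 4 * ρ ^ 2)
        + 12 * A * ρ * Real.cos θ ^ 2 = 0)
    (hρdot : -(A * (3 * (N ^ 2 - 4 * ρ ^ 2) * Real.cos θ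
        + N * Real.sqrt (N ^ 2 - 4 * ρ ^ 2)) * Real.sin θ) = 0) :
    Real.sin θ = 0 ∧
      144 * A ^ 2 * ρ ^ 4 + 48 * A * Δ * ρ ^ 3 + 4 * (Δ ^ 2 - 8 * A ^ 2 * N ^ 2) * ρ ^ 2
        - 12 * A * Δ * N ^ 2 * ρ - Δ ^ 2 * N ^ 2 = 0 :=
  even_subspace_equilibria_general A Δ N θ ρ hΔ hρ hθdot hρdot
end

section
/- Fix Δ > 0 and define D(n, ε) = n⁴ + 4εn³ + (4ε²−Δ²)n² + Δ²ε². Then there exist ε0 > 0 and C > 0 such that for every ε ∈ (0, ε0) there exists n > 0 with D(n, ε) = 0 and |n − ε| ≤ C·ε². (The first Hamiltonian Hopf bifurcation threshold satisfies n = ε + O(ε²).) -/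
/-! The discriminant factors as `D(n, ε) = (n (n + 2ε))² - Δ² (n² - ε²)`. At `n = ε` the second
term vanishes, so `D(ε, ε) = 9ε⁴ > 0`; at `n = ε + ε²` it is `Δ² (2ε³ + ε⁴) ≥ 2Δ²ε³`, which beats
the first term `≤ 64ε⁴` once `ε ≤ Δ²/32`. The intermediate value theorem gives a root in
`[ε, ε + ε²]`. -/

namespace HamiltonianHopf

def discriminant (Δ ε n : ℝ) : ℝ :=
  n ^ 4 + 4 * ε * n ^ 3 + (4 * ε ^ 2 - Δ ^ 2) * n ^ 2 + Δ ^ 2 * ε ^ 2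

theorem discriminant_eq (Δ ε n : ℝ) :
    discriminant Δ ε n = (n * (n + 2 * ε)) ^ 2 - Δ ^ 2 * (n ^ 2 - ε ^ 2) := by
  unfold discriminant; ring

theorem continuous_discriminant (Δ ε : ℝ) : Continuous (discriminant Δ ε) := by
  unfold discriminant; fun_prop

theorem discriminant_self (Δ ε : ℝ) : discriminant Δ ε ε = 9 * ε ^ 4 := by
  rw [discriminant_eq]; ring

theorem discriminant_add_sq_nonpos {Δ ε : ℝ} (hε : 0 < ε) (hε1 : ε ≤ 1)
    (hεΔ : 32 * ε ≤ Δ ^ 2) : discriminant Δ ε (ε + ε ^ 2) ≤ 0 := by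
  have hprod : (ε + ε ^ 2) * (ε + ε ^ 2 + 2 * ε) ≤ 8 * ε ^ 2 := by
    have h : (1 + ε) * (3 + ε) ≤ 8 := by nlinarith
    calc _ = ε ^ 2 * ((1 + ε) * (3 + ε)) := by ring
      _ ≤ ε ^ 2 * 8 := by gcongr
      _ = 8 * ε ^ 2 := by ring
  have hfirst : ((ε + ε ^ 2) * (ε + ε ^ 2 + 2 * ε)) ^ 2 ≤ 64 * ε ^ 4 := by
    calc _ ≤ (8 * ε ^ 2) ^ 2 := pow_le_pow_left₀ (by positivity) hprod 2
      _ = 64 * ε ^ 4 := by ring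
  have hsecond : 64 * ε ^ 4 ≤ Δ ^ 2 * ((ε + ε ^ 2) ^ 2 - ε ^ 2) :=
    calc 64 * ε ^ 4 = (32 * ε) * (2 * ε ^ 3) := by ring
      _ ≤ Δ ^ 2 * (2 * ε ^ 3 + ε ^ 4) := by gcongr; nlinarith [pow_pos hε 4]
      _ = Δ ^ 2 * ((ε + ε ^ 2) ^ 2 - ε ^ 2) := by ring
  rw [discriminant_eq]
  linarith

theorem exists_discriminant_eq_zero_mem_Icc {Δ ε : ℝ} (hε : 0 < ε) (hε1 : ε ≤ 1)
    (hεΔ : 32 * ε ≤ Δ ^ 2) : ∃ n ∈ Set.Icc ε (ε + ε ^ 2), discriminant Δ ε n = 0 :=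
  intermediate_value_Icc' (by nlinarith) (continuous_discriminant Δ ε).continuousOn
    ⟨discriminant_add_sq_nonpos hε hε1 hεΔ, by rw [discriminant_self]; positivity⟩

end HamiltonianHopf

open HamiltonianHopf in
/-- The first Hamiltonian Hopf bifurcation threshold: for fixed `Δ > 0` there
exist `ε₀ > 0` and `C > 0` such that for every `ε ∈ (0, ε₀)` the bifurcation
discriminant `D(n,ε) = n⁴ + 4εn³ + (4ε²−Δ²)n² + Δ²ε²` has a positive root `n`
with `n = ε + O(ε²)`, i.e. `|n − ε| ≤ Cε²`. -/
theorem HH1_threshold_asymptotics (Δ : ℝ) (hΔ : 0 < Δ) :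
    ∃ ε0 > (0 : ℝ), ∃ C > (0 : ℝ), ∀ ε : ℝ, ε ∈ Set.Ioo 0 ε0 →
      ∃ n > (0 : ℝ),
        n ^ 4 + 4 * ε * n ^ 3 + (4 * ε ^ 2 - Δ ^ 2) * n ^ 2 + Δ ^ 2 * ε ^ 2 = 0 ∧
        |n - ε| ≤ C * ε ^ 2 := by
  refine ⟨min 1 (Δ ^ 2 / 32), lt_min one_pos (by positivity), 1, one_pos, ?_⟩
  rintro ε ⟨hε, hεlt⟩
  have hε1 : ε ≤ 1 := (hεlt.trans_le (min_le_left _ _)).le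
  have hεΔ : 32 * ε ≤ Δ ^ 2 := by linarith [hεlt.trans_le (min_le_right 1 (Δ ^ 2 / 32))]
  obtain ⟨n, ⟨hεn, hnε⟩, hroot⟩ := exists_discriminant_eq_zero_mem_Icc hε hε1 hεΔ
  refine ⟨n, hε.trans_le hεn, hroot, ?_⟩
  rw [abs_of_nonneg (sub_nonneg.mpr hεn)]
  linarith
end

section
/- Let Δ ∈ ℝ and ε > 0 be real. Define the 4×4 real matrices 𝒜 = [[0,0,ε−Δ,−ε],[0,0,−ε,Δ+ε],[Δ−ε,−ε,0,0],[−ε,−Δ−ε,0,0]], P = [[1/(2√ε),0,0,√ε],[1/(2√ε),0,0,−√ε],[0,−1/(2√ε),√ε,0],[0,1/(2√ε),√ε,0]], J = [[0,0,1,0],[0,0,0,1],[−1,0,0,0],[0,−1,0,0]], 𝒮 = [[0,1,0,0],[−1,0,0,0],[0,0,0,1],[0,0,−1,0]], and 𝒥 = [[1,0,0,0],[0,1,0,0]] placed in the lower-left block, i.e. 𝒥 = [[0,0,0,0],[0,0,0,0],[1,0,0,0],[0,1,0,0]]. Then P is symplectic, Pᵀ·J·P = J, and P conjugates 𝒜 into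 the non-semisimple −1:1 resonance normal form: 𝒜·P = P·(Δ·𝒮 − 𝒥). -/
/-!
Write `P` in terms of `s = √ε` and split the linearization as `𝒜 = Δ • D + ε • E` into a
detuning part `D` and a coupling part `E`. The detuning part is carried to the semisimple part,
`D P = P 𝒮`, for every `s`. The coupling part is carried to the nilpotent part, `s² • E P = -P 𝒥`.
This identity and `Pᵀ J P = J` hold because the entries `1/(2s)` of `P` pair with the entries `s`
to give `1`.
-/

open Matrix

namespace BurgoyneCushman

variable {K : Type*} [Field K]

def basis (s : K) : Matrix (Fin 4) (Fin 4) K :=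
  !![1 / (2 * s), 0, 0, s;
     1 / (2 * s), 0, 0, -s;
     0, -(1 / (2 * s)), s, 0;
     0, 1 / (2 * s), s, 0]

def symplecticJ : Matrix (Fin 4) (Fin 4) K :=
  !![0, 0, 1, 0; 0, 0, 0, 1; -1, 0, 0, 0; 0, -1, 0, 0]

def semisimplePart : Matrix (Fin 4) (Fin 4) K :=
  !![0, 1, 0, 0; -1, 0, 0, 0; 0, 0, 0, 1; 0, 0, -1, 0]

def nilpotentPart : Matrix (Fin 4) (Fin 4) K :=
  !![0, 0, 0, 0; 0, 0, 0, 0; 1, 0, 0, 0; 0, 1, 0, 0]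

def linearization (Δ ε : K) : Matrix (Fin 4) (Fin 4) K :=
  !![0, 0, ε - Δ, -ε;
     0, 0, -ε, Δ + ε;
     Δ - ε, -ε, 0, 0;
     -ε, -Δ - ε, 0, 0]

def detuningPart : Matrix (Fin 4) (Fin 4) K :=
  !![0, 0, -1, 0; 0, 0, 0, 1; 1, 0, 0, 0; 0, -1, 0, 0]

def couplingPart : Matrix (Fin 4) (Fin 4) K :=
  !![0, 0, 1, -1; 0, 0, -1, 1; -1, -1, 0, 0; -1, -1, 0, 0]

theorem linearization_eq (Δ ε : K) :
    linearization Δ ε = Δ • detuningPart + ε • couplingPart := by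
  ext i j
  fin_cases i <;> fin_cases j <;> simp [linearization, detuningPart, couplingPart] <;> ring

theorem detuningPart_mul_basis (s : K) :
    detuningPart * basis s = basis s * semisimplePart := by
  ext i j
  fin_cases i <;> fin_cases j <;>
    simp [detuningPart, basis, semisimplePart, Matrix.mul_apply, Fin.sum_univ_four]

theorem sq_smul_couplingPart_mul_basis [NeZero (2 : K)] {s : K} (hs : s ≠ 0) :
    s ^ 2 • (couplingPart * basis s) = -(basis s * nilpotentPart) := by
  ext i j
  fin_cases i <;> fin_cases j <;>
    simp [couplingPart, basis, nilpotentPart] <;>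
    field_simp <;> ring

theorem basis_transpose_mul_symplecticJ_mul_basis [NeZero (2 : K)] {s : K} (hs : s ≠ 0) :
    (basis s)ᵀ * symplecticJ * basis s = symplecticJ := by
  ext i j
  fin_cases i <;> fin_cases j <;>
    simp [symplecticJ, basis, Matrix.mul_apply, Fin.sum_univ_four] <;>
    field_simp <;> ring

theorem linearization_mul_basis [NeZero (2 : K)] (Δ : K) {s : K} (hs : s ≠ 0) :
    linearization Δ (s ^ 2) * basis s = basis s * (Δ • semisimplePart - nilpotentPart) := by
  rw [linearization_eq, add_mul, smul_mul_assoc, smul_mul_assoc, detuningPart_mul_basis,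
    sq_smul_couplingPart_mul_basis hs, mul_sub, mul_smul_comm, sub_eq_add_neg]

end BurgoyneCushman

open BurgoyneCushman in
/-- The Burgoyne–Cushman change of basis at the first Hamiltonian Hopf bifurcation:
`P` is symplectic (`Pᵀ J P = J`) and conjugates the linearization matrix `𝒜` into
the non-semisimple −1:1 resonance normal form: `𝒜 P = P (Δ𝒮 − 𝒥)`. -/
theorem burgoyne_cushman_normal_form (Δ ε : ℝ) (hε : 0 < ε) :
    (!![1 / (2 * Real.sqrt ε), 0, 0, Real.sqrt ε;
        1 / (2 * Real.sqrt ε), 0, 0, -Real.sqrt ε;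
        0, -(1 / (2 * Real.sqrt ε)), Real.sqrt ε, 0;
        0, 1 / (2 * Real.sqrt ε), Real.sqrt ε, 0] : Matrix (Fin 4) (Fin 4) ℝ).transpose
      * (!![0, 0, 1, 0; 0, 0, 0, 1; -1, 0, 0, 0; 0, -1, 0, 0] : Matrix (Fin 4) (Fin 4) ℝ)
      * !![1 / (2 * Real.sqrt ε), 0, 0, Real.sqrt ε;
           1 / (2 * Real.sqrt ε), 0, 0, -Real.sqrt ε;
           0, -(1 / (2 * Real.sqrt ε)), Real.sqrt ε, 0;
           0, 1 / (2 * Real.sqrt ε), Real.sqrt ε, 0]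
      = !![0, 0, 1, 0; 0, 0, 0, 1; -1, 0, 0, 0; 0, -1, 0, 0] ∧
    (!![0, 0, ε - Δ, -ε;
        0, 0, -ε, Δ + ε;
        Δ - ε, -ε, 0, 0;
        -ε, -Δ - ε, 0, 0] : Matrix (Fin 4) (Fin 4) ℝ)
      * !![1 / (2 * Real.sqrt ε), 0, 0, Real.sqrt ε;
           1 / (2 * Real.sqrt ε), 0, 0, -Real.sqrt ε;
           0, -(1 / (2 * Real.sqrt ε)), Real.sqrt ε, 0;
           0, 1 / (2 * Real.sqrt ε), Real.sqrt ε, 0]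
      = !![1 / (2 * Real.sqrt ε), 0, 0, Real.sqrt ε;
           1 / (2 * Real.sqrt ε), 0, 0, -Real.sqrt ε;
           0, -(1 / (2 * Real.sqrt ε)), Real.sqrt ε, 0;
           0, 1 / (2 * Real.sqrt ε), Real.sqrt ε, 0]
        * (Δ • (!![0, 1, 0, 0; -1, 0, 0, 0; 0, 0, 0, 1; 0, 0, -1, 0] : Matrix (Fin 4) (Fin 4) ℝ)
            - !![0, 0, 0, 0; 0, 0, 0, 0; 1, 0, 0, 0; 0, 1, 0, 0]) := by
  have hs : Real.sqrt ε ≠ 0 := (Real.sqrt_pos.mpr hε).ne'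
  have h := linearization_mul_basis Δ hs
  rw [Real.sq_sqrt hε.le] at h
  exact ⟨basis_transpose_mul_symplecticJ_mul_basis hs, h⟩
end

section
/- Let Δ ≠ 0 and ε ≠ 0 be real and let 𝒜 = [[0,0,ε−Δ,−ε],[0,0,−ε,Δ+ε],[Δ−ε,−ε,0,0],[−ε,−Δ−ε,0,0]]. Then (𝒜² + Δ²·I)² = 0 while 𝒜² + Δ²·I ≠ 0; consequently the characteristic polynomial of 𝒜 is (X² + Δ²)², its eigenvalues are ±iΔ each with algebraic multiplicity two, and 𝒜 is not diagonalizable over ℂ (the eigenvalues ±iΔ are non-semisimple). -/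
/-!
A direct computation gives `𝒜² + Δ²I = 2Δε • M` for a fixed nonzero matrix `M` with `M² = 0`.
Over `ℂ` the characteristic polynomial `(X² + Δ²)²` splits as `(X - iΔ)²(X + iΔ)²`. If `P⁻¹𝒜P`
were diagonal, then so would be `P⁻¹(𝒜² + Δ²I)P`, a nilpotent matrix; a nilpotent diagonal
matrix over a reduced ring is zero, contradicting `𝒜² + Δ²I ≠ 0`.
-/

open Polynomial

/-- The matrix `𝒜` of the linearized truncated normal form about the dipole mode
at the first Hamiltonian Hopf bifurcation. -/
def HHmatrix (Δ ε : ℝ) : Matrix (Fin 4) (Fin 4) ℝ :=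
  !![0, 0, ε - Δ, -ε;
     0, 0, -ε, Δ + ε;
     Δ - ε, -ε, 0, 0;
     -ε, -Δ - ε, 0, 0]

namespace Matrix

variable {n R K : Type*} [Fintype n] [DecidableEq n] [CommSemiring R]

theorem IsDiag.aeval [CommSemiring K] [Algebra R K] {D : Matrix n n K} (hD : D.IsDiag)
    (q : R[X]) : (aeval D q).IsDiag := by
  rw [← hD.diagonal_diag, ← diagonalAlgHom_apply R, aeval_algHom_apply]
  exact isDiag_diagonal _

theorem IsDiag.eq_zero_of_isNilpotent [CommSemiring K] [IsReduced K] {D : Matrix n n K}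
    (hD : D.IsDiag) (hnil : IsNilpotent D) : D = 0 := by
  obtain ⟨k, hk⟩ := hnil
  rw [← hD.diagonal_diag, diagonal_pow, diagonal_eq_zero] at hk
  rw [← hD.diagonal_diag, IsNilpotent.eq_zero ⟨k, hk⟩, diagonal_zero']

theorem aeval_eq_zero_of_isNilpotent_of_isDiag_conj [CommRing K] [IsReduced K] [Algebra R K]
    {A P : Matrix n n K} (hP : IsUnit P.det) (hD : (P⁻¹ * A * P).IsDiag) (q : R[X])
    (hnil : IsNilpotent (aeval A q)) : aeval A q = 0 := by
  obtain ⟨u, rfl⟩ := (isUnit_iff_isUnit_det P).mpr hP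
  let σ := MulSemiringAction.toAlgEquiv R (Matrix n n K) (ConjAct.toConjAct u⁻¹)
  have hσA : σ A = (u : Matrix n n K)⁻¹ * A * u := by
    simp [σ, ConjAct.units_smul_def, coe_units_inv]
  have hσq : σ (aeval A q) = aeval (σ A) q := (aeval_algHom_apply σ.toAlgHom A q).symm
  have hdiag : (σ (aeval A q)).IsDiag := by
    rw [hσq, hσA]
    exact hD.aeval q
  exact (map_eq_zero_iff σ σ.injective).mp (hdiag.eq_zero_of_isNilpotent (hnil.map σ))

theorem not_exists_isDiag_conj_map_of_isNilpotent_aeval [CommRing K] [IsReduced K] [Algebra R K]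
    [FaithfulSMul R K] (A : Matrix n n R) (q : R[X])
    (hnil : IsNilpotent (aeval A q)) (hne : aeval A q ≠ 0) :
    ¬ ∃ P : Matrix n n K, IsUnit P.det ∧ (P⁻¹ * A.map (algebraMap R K) * P).IsDiag := by
  rintro ⟨P, hP, hD⟩
  let φ : Matrix n n R →ₐ[R] Matrix n n K := (Algebra.ofId R K).mapMatrix
  have hφ : Function.Injective φ := map_injective (FaithfulSMul.algebraMap_injective R K)
  have hzero := aeval_eq_zero_of_isNilpotent_of_isDiag_conj (A := φ A) hP hD q
    (aeval_algHom_apply φ A q ▸ hnil.map φ)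
  rw [aeval_algHom_apply, map_eq_zero_iff φ hφ] at hzero
  exact hne hzero

end Matrix

namespace Polynomial

theorem rootMultiplicity_X_sub_C_pow_mul_X_sub_C_pow {K : Type*} [CommRing K] [IsDomain K]
    {a b : K} (hab : a ≠ b) (m k : ℕ) :
    rootMultiplicity a ((X - C a) ^ m * (X - C b) ^ k) = m := by
  have hb : ¬ IsRoot ((X - C b) ^ k) a := by simp [sub_eq_zero, hab]
  rw [rootMultiplicity_mul (mul_ne_zero (pow_ne_zero _ (X_sub_C_ne_zero a))
    (pow_ne_zero _ (X_sub_C_ne_zero b))), rootMultiplicity_X_sub_C_pow,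
    rootMultiplicity_eq_zero hb, add_zero]

theorem X_sq_add_C_sq_eq {K : Type*} [CommRing K] {i : K} (hi : i ^ 2 = -1) (a : K) :
    X ^ 2 + C (a ^ 2) = (X - C (i * a)) * (X - C (-(i * a))) := by
  have hCi : C i ^ 2 = (-1 : K[X]) := by rw [← map_pow, hi, map_neg, map_one]
  simp only [map_neg, map_mul, map_pow, sub_neg_eq_add]
  linear_combination C a ^ 2 * hCi

theorem map_X_sq_add_C_sq_sq_complex (a : ℝ) :
    ((X ^ 2 + C (a ^ 2)) ^ 2 : ℝ[X]).map (algebraMap ℝ ℂ) =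
      (X - C (Complex.I * a)) ^ 2 * (X - C (-(Complex.I * a))) ^ 2 := by
  rw [← mul_pow, ← X_sq_add_C_sq_eq Complex.I_sq]
  simp

end Polynomial

def HHnilpotent : Matrix (Fin 4) (Fin 4) ℝ :=
  !![1, 1, 0, 0;
     -1, -1, 0, 0;
     0, 0, 1, -1;
     0, 0, 1, -1]

theorem HHnilpotent_sq : HHnilpotent ^ 2 = 0 := by
  ext i j
  fin_cases i <;> fin_cases j <;> simp [HHnilpotent, sq]

theorem HHnilpotent_ne_zero : HHnilpotent ≠ 0 :=
  fun h => by simpa [HHnilpotent] using congrFun (congrFun h 0) 0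

theorem HHmatrix_sq_add_smul_one (Δ ε : ℝ) :
    HHmatrix Δ ε ^ 2 + Δ ^ 2 • (1 : Matrix (Fin 4) (Fin 4) ℝ) = (2 * Δ * ε) • HHnilpotent := by
  ext i j
  fin_cases i <;> fin_cases j <;> simp [HHmatrix, HHnilpotent, sq] <;> ring

theorem HHmatrix_charpoly (Δ ε : ℝ) : (HHmatrix Δ ε).charpoly = (X ^ 2 + C (Δ ^ 2)) ^ 2 := by
  simp [Matrix.charpoly, Matrix.det_succ_row_zero, Fin.sum_univ_succ, HHmatrix, Matrix.submatrix,
    Fin.succAbove]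
  ring

/-- For `Δ ≠ 0`, `ε ≠ 0`: `(𝒜² + Δ²I)² = 0` while `𝒜² + Δ²I ≠ 0`; consequently
the characteristic polynomial of `𝒜` is `(X² + Δ²)²`, its eigenvalues `±iΔ` each
have algebraic multiplicity two, and `𝒜` is not diagonalizable over ℂ. -/
theorem HHmatrix_nonsemisimple (Δ ε : ℝ) (hΔ : Δ ≠ 0) (hε : ε ≠ 0) :
    ((HHmatrix Δ ε) ^ 2 + (Δ ^ 2) • (1 : Matrix (Fin 4) (Fin 4) ℝ)) ^ 2 = 0 ∧
    (HHmatrix Δ ε) ^ 2 + (Δ ^ 2) • (1 : Matrix (Fin 4) (Fin 4) ℝ) ≠ 0 ∧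
    (HHmatrix Δ ε).charpoly = (X ^ 2 + C (Δ ^ 2)) ^ 2 ∧
    Polynomial.rootMultiplicity (Complex.I * (Δ : ℂ))
      ((HHmatrix Δ ε).charpoly.map (algebraMap ℝ ℂ)) = 2 ∧
    Polynomial.rootMultiplicity (-(Complex.I * (Δ : ℂ)))
      ((HHmatrix Δ ε).charpoly.map (algebraMap ℝ ℂ)) = 2 ∧
    ¬ ∃ P : Matrix (Fin 4) (Fin 4) ℂ, IsUnit P.det ∧
        (P⁻¹ * (HHmatrix Δ ε).map (algebraMap ℝ ℂ) * P).IsDiag := by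
  set A := HHmatrix Δ ε
  have hN := HHmatrix_sq_add_smul_one Δ ε
  have hN_sq : (A ^ 2 + Δ ^ 2 • 1) ^ 2 = 0 := by
    rw [hN, _root_.smul_pow, HHnilpotent_sq, smul_zero]
  have hN_ne : A ^ 2 + Δ ^ 2 • 1 ≠ 0 := hN ▸ smul_ne_zero (by positivity) HHnilpotent_ne_zero
  have hiΔ : Complex.I * Δ ≠ -(Complex.I * Δ) := by
    rw [ne_eq, CharZero.eq_neg_self_iff]
    exact mul_ne_zero Complex.I_ne_zero (Complex.ofReal_ne_zero.mpr hΔ)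
  have hsplit := map_X_sq_add_C_sq_sq_complex Δ
  rw [← HHmatrix_charpoly Δ ε] at hsplit
  refine ⟨hN_sq, hN_ne, HHmatrix_charpoly Δ ε, ?_, ?_, ?_⟩
  · rw [hsplit, rootMultiplicity_X_sub_C_pow_mul_X_sub_C_pow hiΔ]
  · rw [hsplit, mul_comm ((X - C _) ^ 2), rootMultiplicity_X_sub_C_pow_mul_X_sub_C_pow hiΔ.symm]
  · have hq : aeval A (X ^ 2 + C (Δ ^ 2)) = A ^ 2 + Δ ^ 2 • 1 := by
      rw [map_add, map_pow, aeval_X, aeval_C, Algebra.algebraMap_eq_smul_one]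
    exact Matrix.not_exists_isDiag_conj_map_of_isNilpotent_aeval A _ (hq ▸ ⟨2, hN_sq⟩) (hq ▸ hN_ne)
end
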